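/- arXiv:0809.4650 — 6 statements merged into one kernel-verified Lean document; each statement's English description precedes it below -/
import Mathlib

section
/- For every matrix X₀ ∈ Matrix(m,n,ℂ) and every pair of subsets I ⊆ {1,…,m}, J ⊆ {1,…,n} of equal cardinality r ≥ 1, there exists a map γ : ℂ → Matrix(m,n,ℂ) with γ(0) = X₀ which is an integral curve of the Hamiltonian Δ_{I,J} on all of ℂ, and such that each matrix entry evolves quasi-exponentially: for every (k,l) there exist an integer N ≥ 0, polynomials p, p₁, …, p_N ∈ ℂ[t] with deg p ≤ 2r−1 and deg p_a ≤ 2r−2 for a = 1,…,N, and nonzero complex numbers α₁, …, α_N, such that γ(t)_{kl} = p(t) + ∑_{a=1}^{N} p_a(t)·e^{α_a t} for all t ∈ ℂ. -/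
/-!
Along the flow of `Δ_{I,J}` the `I × J` block `A` of the matrix stays fixed. The bracket
`{x_{kl}, Δ_{I,J}}` is computed by Jacobi's formula: the partial derivatives of a minor are its
cofactors. Once `A` is frozen, the `J`-entries of every row and the `I`-entries of every column
evolve by linear systems with constant coefficients, built from `A` and its adjugate. Decomposing
the initial data into generalized eigenvectors, these systems are solved by quasi-polynomials
`∑ p(t) e^{μt}` with `deg p < r`. Any other entry has as its derivative a quadratic expression
in these, so that derivative is a quasi-polynomial of degree `≤ 2r - 2`. Integrating it raises the
degree only of the part with exponent `0`. The curve obtained this way is an integral curve: its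
`J`-columns and `I`-rows satisfy the same linear systems, with the same initial values, as the
solutions it was built from.
-/

open MvPolynomial

/-- The quadratic Poisson bracket on the polynomial algebra of the matrix affine
Poisson space `M_{m,n}`. -/
noncomputable def pois {m n : ℕ} (f g : MvPolynomial (Fin m × Fin n) ℂ) :
    MvPolynomial (Fin m × Fin n) ℂ :=
  ∑ i : Fin m, ∑ k : Fin m, ∑ j : Fin n, ∑ l : Fin n,
    (((k : ℤ) - (i : ℤ)).sign + ((l : ℤ) - (j : ℤ)).sign) •
      (X (i, l) * X (k, j) * pderiv (i, j) f * pderiv (k, l) g)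

/-- The minor `Δ_{I,J}` (equal to `0` by convention if `|I| ≠ |J|`). -/
noncomputable def Delta {m n : ℕ} (I : Finset (Fin m)) (J : Finset (Fin n)) :
    MvPolynomial (Fin m × Fin n) ℂ :=
  if h : J.card = I.card then
    Matrix.det (Matrix.of fun a b : Fin I.card =>
      X ((I.orderIsoOfFin rfl a).1, (J.orderIsoOfFin h b).1))
  else 0

/-- Evaluation of a polynomial at a matrix. -/
noncomputable def evalM {m n : ℕ} (Y : Matrix (Fin m) (Fin n) ℂ)
    (f : MvPolynomial (Fin m × Fin n) ℂ) : ℂ :=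
  eval (fun p => Y p.1 p.2) f

namespace Derivation

open Finset

variable {R A M : Type*} [CommRing R] [CommRing A] [Algebra R A] [AddCommGroup M] [Module A M]
  [Module R M] (D : Derivation R A M)

theorem finset_sum_apply {ι : Type*} (s : Finset ι) (f : ι → Derivation R A M) (a : A) :
    (∑ i ∈ s, f i) a = ∑ i ∈ s, f i a := by
  rw [← coeFnAddMonoidHom_apply, map_sum, Finset.sum_apply]
  rfl

theorem map_finset_prod {ι : Type*} [DecidableEq ι] (s : Finset ι) (f : ι → A) :
    D (∏ i ∈ s, f i) = ∑ i ∈ s, (∏ j ∈ s.erase i, f j) • D (f i) := by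
  induction s using Finset.induction_on with
  | empty => simp
  | insert a s ha ih =>
    rw [prod_insert ha, leibniz, ih, sum_insert ha, erase_insert ha, smul_sum, add_comm]
    congr 1
    refine sum_congr rfl fun i hi => ?_
    rw [erase_insert_of_ne (ne_of_mem_of_not_mem hi ha).symm, prod_insert
      (fun h => ha (mem_of_mem_erase h)), smul_smul]

/-- Jacobi's formula for the derivative of a determinant. -/
theorem map_det {n : Type*} [Fintype n] [DecidableEq n] (B : Matrix n n A) :
    D B.det = ∑ i, ∑ j, B.adjugate i j • D (B j i) := by
  have hadj : ∀ i j, B.adjugate j i =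
      ∑ σ : Equiv.Perm n, Equiv.Perm.sign σ •
        if σ i = j then ∏ k ∈ univ.erase i, B k (σ k) else 0 := by
    intro i j
    rw [Matrix.adjugate_def, Matrix.of_apply, Matrix.cramer_apply, Matrix.det_apply]
    refine sum_congr rfl fun σ _ => ?_
    rw [← mul_prod_erase _ _ (mem_univ i), Matrix.updateCol_self, Pi.single_apply]
    split_ifs
    · rw [one_mul]
      congr 1
      exact prod_congr rfl fun k hk => Matrix.updateCol_ne (ne_of_mem_erase hk)
    · simp
  rw [← Matrix.det_transpose]
  simp only [Matrix.det_apply, map_sum, Units.smul_def, map_zsmul, map_finset_prod, hadj,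
    Matrix.transpose_apply, sum_smul, ite_smul, zero_smul, smul_assoc, smul_sum]
  rw [sum_comm]
  conv_rhs => rw [sum_comm]
  refine sum_congr rfl fun j _ => ?_
  conv_rhs => rw [sum_comm]
  simp [smul_ite]

end Derivation

namespace Matrix

open Finset

variable {n R : Type*} [Fintype n] [DecidableEq n] [CommRing R] (A : Matrix n n R)

lemma sum_adjugate_mul_apply (c b : n) :
    ∑ a, A.adjugate c a * A a b = if c = b then A.det else 0 := by
  simpa [mul_apply, one_apply] using congrFun (congrFun A.adjugate_mul c) b

lemma sum_mul_adjugate_apply (a c : n) :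
    ∑ b, A a b * A.adjugate b c = if a = c then A.det else 0 := by
  simpa [mul_apply, one_apply] using congrFun (congrFun A.mul_adjugate a) c

end Matrix

noncomputable section

open Set Submodule Pointwise

def expMonomial (j : ℕ) (α : ℂ) (t : ℂ) : ℂ := t ^ j * Complex.exp (α * t)

-- `quasiExp d {0}` is the space of polynomial functions of degree `≤ d`.
def quasiExp (d : ℕ) (S : Set ℂ) : Submodule ℂ (ℂ → ℂ) :=
  span ℂ (image2 expMonomial (Iic d) S)

lemma expMonomial_mem_quasiExp {d j : ℕ} {α : ℂ} {S : Set ℂ} (hj : j ≤ d) (hα : α ∈ S) :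
    expMonomial j α ∈ quasiExp d S :=
  subset_span (mem_image2_of_mem hj hα)

lemma quasiExp_mono {d d' : ℕ} {S S' : Set ℂ} (hd : d ≤ d') (hS : S ⊆ S') :
    quasiExp d S ≤ quasiExp d' S' :=
  span_mono (image2_subset (Iic_subset_Iic.2 hd) hS)

lemma const_mem_quasiExp (d : ℕ) {S : Set ℂ} (hS : 0 ∈ S) (c : ℂ) :
    (fun _ => c) ∈ quasiExp d S := by
  convert smul_mem _ c (expMonomial_mem_quasiExp (Nat.zero_le d) hS) using 1
  ext t
  simp [expMonomial]

lemma expMonomial_mul (i j : ℕ) (α β : ℂ) :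
    expMonomial i α * expMonomial j β = expMonomial (i + j) (α + β) := by
  ext t
  simp only [Pi.mul_apply, expMonomial, pow_add, add_mul, Complex.exp_add]
  ring

lemma mul_mem_quasiExp {d e : ℕ} {S T : Set ℂ} {f g : ℂ → ℂ}
    (hf : f ∈ quasiExp d S) (hg : g ∈ quasiExp e T) : f * g ∈ quasiExp (d + e) (S + T) := by
  have hfg := Submodule.mul_mem_mul hf hg
  rw [quasiExp, quasiExp, span_mul_span] at hfg
  refine span_mono ?_ hfg
  rintro _ ⟨_, ⟨i, hi, α, hα, rfl⟩, _, ⟨j, hj, β, hβ, rfl⟩, rfl⟩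
  simp only [expMonomial_mul]
  exact mem_image2_of_mem (mem_Iic.2 (add_le_add hi hj)) (add_mem_add hα hβ)

lemma hasDerivAt_expMonomial (j : ℕ) (α t : ℂ) :
    HasDerivAt (expMonomial j α) (j * expMonomial (j - 1) α t + α * expMonomial j α t) t := by
  refine ((hasDerivAt_pow j t).mul ((hasDerivAt_id t).const_mul α).cexp).congr_deriv ?_
  simp only [expMonomial, id_eq]
  ring

lemma exists_primitive_expMonomial {α : ℂ} (hα : α ≠ 0) (j : ℕ) :
    ∃ G ∈ quasiExp j {α}, ∀ t, HasDerivAt G (expMonomial j α t) t := by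
  induction j with
  | zero =>
    refine ⟨α⁻¹ • expMonomial 0 α, smul_mem _ _ (expMonomial_mem_quasiExp le_rfl rfl),
      fun t => ((hasDerivAt_expMonomial 0 α t).const_mul α⁻¹).congr_deriv ?_⟩
    field_simp
    ring
  | succ j ih =>
    -- integration by parts: `∫ t^{j+1} e^{αt} = α⁻¹ (t^{j+1} e^{αt} - (j+1) ∫ t^j e^{αt})`
    obtain ⟨G, hG, hGderiv⟩ := ih
    refine ⟨α⁻¹ • (expMonomial (j + 1) α - ((j + 1 : ℕ) : ℂ) • G), smul_mem _ _ (sub_mem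
      (expMonomial_mem_quasiExp le_rfl rfl)
      (smul_mem _ _ (quasiExp_mono (Nat.le_succ j) subset_rfl hG))), fun t => ?_⟩
    refine (((hasDerivAt_expMonomial (j + 1) α t).sub
      ((hGderiv t).const_mul _)).const_mul α⁻¹).congr_deriv ?_
    simp only [Nat.add_sub_cancel]
    field_simp
    ring

lemma exists_primitive_of_mem_quasiExp {d : ℕ} {f : ℂ → ℂ} (hf : f ∈ quasiExp d univ) :
    ∃ F : ℂ → ℂ, F 0 = 0 ∧ (∀ t, HasDerivAt F (f t) t) ∧
      F ∈ quasiExp (d + 1) {0} ⊔ quasiExp d {0}ᶜ := by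
  induction hf using Submodule.span_induction with
  | mem f hf =>
    obtain ⟨j, hj, α, -, rfl⟩ := hf
    rcases eq_or_ne α 0 with rfl | hα
    · refine ⟨((j + 1 : ℕ) : ℂ)⁻¹ • expMonomial (j + 1) 0, by simp [expMonomial],
        fun t => ((hasDerivAt_expMonomial (j + 1) 0 t).const_mul _).congr_deriv ?_,
        mem_sup_left (smul_mem _ _ (expMonomial_mem_quasiExp (by simpa using hj) rfl))⟩
      simp only [Nat.add_sub_cancel]
      field_simp
      ring
    · obtain ⟨G, hG, hGderiv⟩ := exists_primitive_expMonomial hα j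
      have hG' : G ∈ quasiExp d {0}ᶜ := quasiExp_mono hj (by simpa using hα.symm) hG
      have hc : (fun _ => G 0) ∈ quasiExp (d + 1) {0} :=
        const_mem_quasiExp _ (mem_singleton 0) (G 0)
      exact ⟨G - fun _ => G 0, sub_self _, fun t => (hGderiv t).sub_const _,
        sub_mem (mem_sup_right hG') (mem_sup_left hc)⟩
  | zero => exact ⟨0, rfl, fun t => hasDerivAt_const t 0, zero_mem _⟩
  | add f g _ _ hf hg =>
    obtain ⟨F, hF0, hFderiv, hF⟩ := hf
    obtain ⟨G, hG0, hGderiv, hG⟩ := hg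
    exact ⟨F + G, by simp [hF0, hG0], fun t => (hFderiv t).add (hGderiv t), add_mem hF hG⟩
  | smul c f _ hf =>
    obtain ⟨F, hF0, hFderiv, hF⟩ := hf
    exact ⟨c • F, by simp [hF0], fun t => (hFderiv t).const_mul c, smul_mem _ c hF⟩

lemma exists_sum_of_mem_quasiExp {d : ℕ} {S : Set ℂ} {f : ℂ → ℂ} (hf : f ∈ quasiExp d S) :
    ∃ (N : ℕ) (q : Fin N → Polynomial ℂ) (α : Fin N → ℂ), (∀ a, (q a).natDegree ≤ d) ∧
      (∀ a, α a ∈ S) ∧ ∀ t, f t = ∑ a, (q a).eval t * Complex.exp (α a * t) := by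
  obtain ⟨N, c, g, rfl⟩ := mem_span_set'.1 hf
  choose j hj α hα hg using fun a => (g a).2
  refine ⟨N, fun a => Polynomial.C (c a) * Polynomial.X ^ j a, α,
    fun a => (Polynomial.natDegree_C_mul_X_pow_le _ _).trans (hj a), hα, fun t => ?_⟩
  simp [← hg, expMonomial, mul_assoc]

lemma exists_poly_add_sum_of_mem_quasiExp_sup {d e : ℕ} {f : ℂ → ℂ}
    (hf : f ∈ quasiExp e {0} ⊔ quasiExp d {0}ᶜ) :
    ∃ (N : ℕ) (p : Polynomial ℂ) (q : Fin N → Polynomial ℂ) (α : Fin N → ℂ),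
      p.natDegree ≤ e ∧ (∀ a, (q a).natDegree ≤ d) ∧ (∀ a, α a ≠ 0) ∧
      ∀ t, f t = p.eval t + ∑ a, (q a).eval t * Complex.exp (α a * t) := by
  obtain ⟨g, hg, h, hh, rfl⟩ := mem_sup.1 hf
  obtain ⟨M, p, β, hp, hβ, hg⟩ := exists_sum_of_mem_quasiExp hg
  obtain ⟨N, q, α, hq, hα, hh⟩ := exists_sum_of_mem_quasiExp hh
  refine ⟨N, ∑ a, p a, q, α, Polynomial.natDegree_sum_le_of_forall_le _ _ fun a _ => hp a,
    hq, hα, fun t => ?_⟩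
  simp_all [Polynomial.eval_finsetSum]

end

noncomputable section

open Set Submodule Finset

lemma eq_of_forall_hasDerivAt_eq {E : Type*} [NormedAddCommGroup E] [NormedSpace ℂ E]
    {f g f' : ℂ → E} (hf : ∀ t, HasDerivAt f (f' t) t) (hg : ∀ t, HasDerivAt g (f' t) t)
    (h0 : f 0 = g 0) : f = g :=
  eq_of_fderiv_eq (fun t => (hf t).differentiableAt) (fun t => (hg t).differentiableAt)
    (fun t => (hf t).hasFDerivAt.fderiv.trans (hg t).hasFDerivAt.fderiv.symm) 0 h0

lemma hasDerivAt_sum_pow_div_factorial_smul {E : Type*} [NormedAddCommGroup E]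
    [NormedSpace ℂ E] (y : ℕ → E) (s : ℕ) (t : ℂ) :
    HasDerivAt (fun t : ℂ => ∑ j ∈ range (s + 1), (t ^ j / j.factorial) • y j)
      (∑ j ∈ range s, (t ^ j / j.factorial) • y (j + 1)) t := by
  have h := HasDerivAt.fun_sum (u := range (s + 1)) fun j _ =>
    ((hasDerivAt_pow j t).div_const (j.factorial : ℂ)).smul_const (y j)
  refine h.congr_deriv ?_
  rw [sum_range_succ']
  simp only [Nat.cast_zero, zero_mul, zero_div, zero_smul, add_zero, Nat.add_sub_cancel]
  refine sum_congr rfl fun j _ => ?_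
  rw [Nat.factorial_succ]
  push_cast
  field_simp

lemma hasDerivAt_exp_smul_genEigen {E : Type*} [NormedAddCommGroup E] [NormedSpace ℂ E]
    (T : Module.End ℂ E) (μ : ℂ) (s : ℕ) {c : E} (hc : ((T - μ • 1) ^ (s + 1)) c = 0) (t : ℂ) :
    HasDerivAt (fun t : ℂ => Complex.exp (μ * t) •
        ∑ j ∈ range (s + 1), (t ^ j / j.factorial) • ((T - μ • 1) ^ j) c)
      (T (Complex.exp (μ * t) •
        ∑ j ∈ range (s + 1), (t ^ j / j.factorial) • ((T - μ • 1) ^ j) c)) t := by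
  set N := T - μ • 1
  set P := fun t : ℂ => ∑ j ∈ range (s + 1), (t ^ j / j.factorial) • (N ^ j) c
  -- the truncated exponential `P t = exp (t N) c` solves `P' = N P`, as `N ^ (s + 1) c = 0`
  have hP : HasDerivAt P (N (P t)) t := by
    convert hasDerivAt_sum_pow_div_factorial_smul (fun j => (N ^ j) c) s t using 1
    simp only [P, map_sum, map_smul, ← Module.End.mul_apply, ← pow_succ']
    rw [sum_range_succ, hc, smul_zero, add_zero]
  have hT : T = N + μ • 1 := by simp [N]
  refine (((hasDerivAt_id t).const_mul μ).cexp.smul hP).congr_deriv ?_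
  change _ = T (Complex.exp (μ * t) • P t)
  rw [map_smul, hT, LinearMap.add_apply, LinearMap.smul_apply, Module.End.one_apply, smul_add,
    smul_smul, id, mul_one, mul_comm μ]

lemma exists_quasiExp_solution {ι : Type*} [Fintype ι] (T : Module.End ℂ (ι → ℂ))
    (v : ι → ℂ) :
    ∃ w : ℂ → ι → ℂ, w 0 = v ∧ (∀ t, HasDerivAt w (T (w t)) t) ∧
      ∀ i, (fun t => w t i) ∈ quasiExp (Fintype.card ι - 1) univ := by
  set s := Fintype.card ι - 1
  have hnil : ∀ μ, ∀ x ∈ T.maxGenEigenspace μ, ((T - μ • 1) ^ (s + 1)) x = 0 := by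
    intro μ x hx
    rw [Module.End.maxGenEigenspace_eq_genEigenspace_finrank, Module.finrank_fintype_fun_eq_card]
      at hx
    exact Module.End.mem_genEigenspace_nat.1
      ((T.genEigenspace μ).monotone (by norm_cast; omega) hx)
  have hv : v ∈ ⨆ μ, T.maxGenEigenspace μ := by
    rw [Module.End.iSup_maxGenEigenspace_eq_top]
    trivial
  obtain ⟨c, hc, hsum⟩ := (Submodule.mem_iSup_iff_exists_finsupp _ v).1 hv
  refine ⟨fun t => ∑ μ ∈ c.support, Complex.exp (μ * t) •
      ∑ j ∈ range (s + 1), (t ^ j / j.factorial) • ((T - μ • 1) ^ j) (c μ), ?_, fun t => ?_,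
      fun i => ?_⟩
  · simp [sum_range_succ', ← hsum, Finsupp.sum]
  · simpa only [map_sum] using HasDerivAt.fun_sum fun μ _ =>
      hasDerivAt_exp_smul_genEigen T μ s (hnil μ _ (hc μ)) t
  · convert sum_mem fun μ _ => sum_mem fun j (hj : j ∈ range (s + 1)) =>
      smul_mem _ ((((T - μ • 1) ^ j) (c μ)) i / (j.factorial : ℂ))
        (expMonomial_mem_quasiExp (Nat.lt_succ_iff.1 (mem_range.1 hj)) (Set.mem_univ μ))
      using 1
    ext t
    simp only [Finset.sum_apply, Pi.smul_apply, smul_eq_mul, expMonomial, Finset.mul_sum]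
    refine sum_congr rfl fun μ _ => sum_congr rfl fun j _ => by ring

-- At an equilibrium the constant solution is chosen, so no uniqueness theorem for the linear
-- system is needed.
lemma exists_quasiExp_solution_eq_const_of_apply_eq_zero {ι : Type*} [Fintype ι]
    (T : Module.End ℂ (ι → ℂ)) (v : ι → ℂ) :
    ∃ w : ℂ → ι → ℂ, w 0 = v ∧ (∀ t, HasDerivAt w (T (w t)) t) ∧
      (∀ i, (fun t => w t i) ∈ quasiExp (Fintype.card ι - 1) univ) ∧
      (T v = 0 → ∀ t, w t = v) := by
  by_cases hv : T v = 0
  · exact ⟨fun _ => v, rfl, fun t => hv ▸ hasDerivAt_const t v,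
      fun i => const_mem_quasiExp _ (Set.mem_univ 0) (v i), fun _ _ => rfl⟩
  · obtain ⟨w, hw0, hw, hwq⟩ := exists_quasiExp_solution T v
    exact ⟨w, hw0, hw, hwq, fun h => absurd h hv⟩

end

noncomputable section

open Finset

variable {m n : ℕ}

def poisDerivation (f : MvPolynomial (Fin m × Fin n) ℂ) :
    Derivation ℂ (MvPolynomial (Fin m × Fin n) ℂ) (MvPolynomial (Fin m × Fin n) ℂ) :=
  ∑ i : Fin m, ∑ k : Fin m, ∑ j : Fin n, ∑ l : Fin n,
    ((((k : ℤ) - (i : ℤ)).sign + ((l : ℤ) - (j : ℤ)).sign) •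
      (X (i, l) * X (k, j) * pderiv (i, j) f)) • pderiv (k, l)

lemma poisDerivation_apply (f g : MvPolynomial (Fin m × Fin n) ℂ) :
    poisDerivation f g = pois f g := by
  simp [poisDerivation, pois, Derivation.finset_sum_apply, mul_assoc]

lemma pois_X_X (k k' : Fin m) (l l' : Fin n) :
    pois (X (k, l) : MvPolynomial (Fin m × Fin n) ℂ) (X (k', l')) =
      (((k' : ℤ) - (k : ℤ)).sign + ((l' : ℤ) - (l : ℤ)).sign) • (X (k, l') * X (k', l)) := by
  simp [pois, pderiv_X, Pi.single_apply, ite_and]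

end

noncomputable section

open Finset Matrix

def signDiff {N : ℕ} (i k : Fin N) : ℂ := (((i : ℤ) - (k : ℤ)).sign : ℂ)

@[simp] lemma signDiff_self {N : ℕ} (i : Fin N) : signDiff i i = 0 := by
  simp [signDiff]

variable {m n ρ : ℕ} (ι : Fin ρ → Fin m) (κ : Fin ρ → Fin n)

-- The Hamiltonian vector field of `Δ` (see `evalM_pois_X_Delta`) in terms of the block `A`, the
-- entries `W k` of row `k` in the columns `κ` and the entries `U l` of column `l` in the rows `ι`.
def crossField (A : Matrix (Fin ρ) (Fin ρ) ℂ) (W : Fin m → Fin ρ → ℂ) (U : Fin n → Fin ρ → ℂ)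
    (k : Fin m) (l : Fin n) : ℂ :=
  ∑ a, ∑ b, (signDiff (ι a) k + signDiff (κ b) l) * W k b * U l a * A.adjugate b a

lemma evalM_pois_X_Delta {I : Finset (Fin m)} {J : Finset (Fin n)} (h : J.card = I.card)
    (Y : Matrix (Fin m) (Fin n) ℂ) (k : Fin m) (l : Fin n) :
    evalM Y (pois (X (k, l)) (Delta I J)) =
      crossField (I.orderEmbOfFin rfl) (J.orderEmbOfFin h)
        (Y.submatrix (I.orderEmbOfFin rfl) (J.orderEmbOfFin h))
        (fun k b => Y k (J.orderEmbOfFin h b)) (fun l a => Y (I.orderEmbOfFin rfl a) l) k l := by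
  set ι := I.orderEmbOfFin rfl
  set κ := J.orderEmbOfFin h
  set B := Matrix.of fun a b => (X (ι a, κ b) : MvPolynomial (Fin m × Fin n) ℂ)
  have hΔ : Delta I J = B.det := by simp [Delta, h, B, ι, κ]
  have hB : B.map (eval fun p => Y p.1 p.2) = Y.submatrix ι κ := by ext; simp [B]
  have hadj : ∀ a b,
      eval (fun p => Y p.1 p.2) (B.adjugate b a) = (Y.submatrix ι κ).adjugate b a := by
    intro a b
    rw [← hB, ← RingHom.mapMatrix_apply, ← RingHom.map_adjugate]
    rfl
  rw [hΔ, ← poisDerivation_apply, Derivation.map_det, crossField, sum_comm]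
  simp only [smul_eq_mul, B, Matrix.of_apply, poisDerivation_apply, pois_X_X, evalM, map_sum]
  refine sum_congr rfl fun a _ => sum_congr rfl fun b _ => ?_
  rw [map_mul, map_zsmul, hadj, map_mul, eval_X, eval_X, zsmul_eq_mul, signDiff, signDiff]
  push_cast
  ring

-- With the block frozen at `A`, `W k` evolves by `rowGen ι A k` (`crossField_apply_col`).
def rowGen (A : Matrix (Fin ρ) (Fin ρ) ℂ) (k : Fin m) : Matrix (Fin ρ) (Fin ρ) ℂ :=
  Matrix.of fun b c => ∑ a, signDiff (ι a) k * A a b * A.adjugate c a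

variable {ι κ} (A : Matrix (Fin ρ) (Fin ρ) ℂ)

lemma rowGen_mulVec_row (a : Fin ρ) : rowGen ι A (ι a) *ᵥ A a = 0 := by
  ext b
  simp only [rowGen, Matrix.mulVec, dotProduct, Matrix.of_apply, sum_mul]
  rw [sum_comm]
  simp [mul_assoc, ← mul_sum, mul_comm (A.adjugate _ _), sum_mul_adjugate_apply]

lemma crossField_apply_col {W : Fin m → Fin ρ → ℂ} {U : Fin n → Fin ρ → ℂ} {b : Fin ρ}
    (hU : U (κ b) = Aᵀ b) (k : Fin m) :
    crossField ι κ A W U k (κ b) = (rowGen ι A k *ᵥ W k) b := by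
  simp only [crossField, rowGen, mulVec, dotProduct, of_apply, hU, transpose_apply, add_mul,
    sum_add_distrib]
  have h0 : ∑ a, ∑ c, signDiff (κ c) (κ b) * W k c * A a b * A.adjugate c a = 0 := by
    rw [sum_comm]
    simp [mul_assoc, ← mul_sum, mul_comm (A _ _), sum_adjugate_mul_apply]
  rw [h0, add_zero, sum_comm]
  exact sum_congr rfl fun c _ => by rw [sum_mul]; exact sum_congr rfl fun a _ => by ring

lemma crossField_transpose (W : Fin m → Fin ρ → ℂ) (U : Fin n → Fin ρ → ℂ) (k : Fin m)
    (l : Fin n) : crossField κ ι Aᵀ U W l k = crossField ι κ A W U k l := by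
  rw [crossField, crossField, sum_comm, ← adjugate_transpose]
  exact sum_congr rfl fun a _ => sum_congr rfl fun b _ => by rw [transpose_apply]; ring

end

noncomputable section

open Set Submodule Matrix

variable {m n ρ : ℕ} {ι : Fin ρ → Fin m} {κ : Fin ρ → Fin n}

lemma crossField_mem_quasiExp (A : Matrix (Fin ρ) (Fin ρ) ℂ) {d : ℕ}
    {W : ℂ → Fin m → Fin ρ → ℂ} {U : ℂ → Fin n → Fin ρ → ℂ}
    (hW : ∀ k b, (fun t => W t k b) ∈ quasiExp d univ)
    (hU : ∀ l a, (fun t => U t l a) ∈ quasiExp d univ) (k : Fin m) (l : Fin n) :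
    (fun t => crossField ι κ A (W t) (U t) k l) ∈ quasiExp (d + d) univ := by
  have h := sum_mem fun a (_ : a ∈ Finset.univ) => sum_mem fun b (_ : b ∈ Finset.univ) =>
    smul_mem _ ((signDiff (ι a) k + signDiff (κ b) l) * A.adjugate b a)
      (quasiExp_mono le_rfl (subset_univ _) (mul_mem_quasiExp (hW k b) (hU l a)))
  convert h using 1
  ext t
  simp only [crossField, Finset.sum_apply, Pi.smul_apply, Pi.mul_apply, smul_eq_mul]
  exact Finset.sum_congr rfl fun a _ => Finset.sum_congr rfl fun b _ => by ring

lemma exists_rowGen_solution (A : Matrix (Fin ρ) (Fin ρ) ℂ) (X₀ : Matrix (Fin m) (Fin n) ℂ)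
    (hA : X₀.submatrix ι κ = A) :
    ∃ W : Fin m → ℂ → Fin ρ → ℂ, (∀ k, W k 0 = fun b => X₀ k (κ b)) ∧
      (∀ k t, HasDerivAt (W k) (rowGen ι A k *ᵥ W k t) t) ∧
      (∀ k b, (fun t => W k t b) ∈ quasiExp (ρ - 1) univ) ∧ ∀ a t, W (ι a) t = A a := by
  choose W hW0 hW hWq hWc using fun k => exists_quasiExp_solution_eq_const_of_apply_eq_zero
    (rowGen ι A k).mulVecLin (fun b => X₀ k (κ b))
  simp only [Fintype.card_fin, mulVecLin_apply] at hW hWq hWc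
  refine ⟨W, hW0, hW, hWq, fun a t => ?_⟩
  rw [← hA] at hWc ⊢
  exact hWc (ι a) (rowGen_mulVec_row _ a) t

theorem exists_crossField_integralCurve (A : Matrix (Fin ρ) (Fin ρ) ℂ)
    (X₀ : Matrix (Fin m) (Fin n) ℂ) (hA : X₀.submatrix ι κ = A) :
    ∃ γ : ℂ → Matrix (Fin m) (Fin n) ℂ, γ 0 = X₀ ∧ (∀ t, (γ t).submatrix ι κ = A) ∧
      (∀ k l t, HasDerivAt (fun s => γ s k l)
        (crossField ι κ A (fun k b => γ t k (κ b)) (fun l a => γ t (ι a) l) k l) t) ∧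
      ∀ k l, (fun t => γ t k l) ∈
        quasiExp ((ρ - 1) + (ρ - 1) + 1) {0} ⊔ quasiExp ((ρ - 1) + (ρ - 1)) {0}ᶜ := by
  obtain ⟨W, hW0, hW, hWq, hWrow⟩ := exists_rowGen_solution A X₀ hA
  obtain ⟨U, hU0, hU, hUq, hUcol⟩ := exists_rowGen_solution Aᵀ X₀ᵀ (by rw [← hA]; rfl)
  choose F hF0 hF hFq using fun k l => exists_primitive_of_mem_quasiExp
    (crossField_mem_quasiExp A (W := fun t k => W k t) (U := fun t l => U l t) hWq hUq k l)
  set γ := fun t => Matrix.of fun k l => X₀ k l + F k l t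
  have hγ : ∀ k l t, HasDerivAt (fun s => γ s k l)
      (crossField ι κ A (fun k => W k t) (fun l => U l t) k l) t :=
    fun k l t => (hF k l t).const_add _
  have hγ0 : γ 0 = X₀ := by ext; simp [γ, hF0]
  have hγW : ∀ k b t, γ t k (κ b) = W k t b := by
    refine fun k b => congrFun (eq_of_forall_hasDerivAt_eq (hγ k (κ b)) (fun t => ?_) ?_)
    · rw [crossField_apply_col A (hUcol b t)]
      exact hasDerivAt_pi.1 (hW k t) b
    · simp [hγ0, hW0]
  have hγU : ∀ l a t, γ t (ι a) l = U l t a := by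
    refine fun l a => congrFun (eq_of_forall_hasDerivAt_eq (hγ (ι a) l) (fun t => ?_) ?_)
    · rw [← crossField_transpose,
        crossField_apply_col Aᵀ (by rw [transpose_transpose, hWrow])]
      exact hasDerivAt_pi.1 (hU l t) a
    · simp [hγ0, hU0]
  refine ⟨γ, hγ0, fun t => ?_, fun k l t => ?_, fun k l => ?_⟩
  · ext a b
    rw [submatrix_apply, hγW, hWrow]
  · convert hγ k l t using 2
    · ext k b; exact hγW k b t
    · ext l a; exact hγU l a t
  · exact add_mem (mem_sup_left (const_mem_quasiExp _ (mem_singleton 0) (X₀ k l))) (hFq k l)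

end

theorem determinantal_flow_complete_quasiExponential_general (m n : ℕ)
    (r : ℕ) (hr : 1 ≤ r)
    (X₀ : Matrix (Fin m) (Fin n) ℂ)
    (I : Finset (Fin m)) (J : Finset (Fin n))
    (hI : I.card = r) (hJ : J.card = r) :
    ∃ γ : ℂ → Matrix (Fin m) (Fin n) ℂ,
      γ 0 = X₀ ∧
      (∀ (k : Fin m) (l : Fin n) (t : ℂ),
        HasDerivAt (fun s => γ s k l)
          (evalM (γ t) (pois (X (k, l)) (Delta I J))) t) ∧
      (∀ (k : Fin m) (l : Fin n),
        ∃ (N : ℕ) (p : Polynomial ℂ) (q : Fin N → Polynomial ℂ) (α : Fin N → ℂ),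
          p.natDegree ≤ 2 * r - 1 ∧
          (∀ a, (q a).natDegree ≤ 2 * r - 2) ∧
          (∀ a, α a ≠ 0) ∧
          ∀ t : ℂ, γ t k l = p.eval t + ∑ a, (q a).eval t * Complex.exp (α a * t)) := by
  have hJI : J.card = I.card := hJ.trans hI.symm
  obtain ⟨γ, hγ0, hγA, hγ, hγq⟩ := exists_crossField_integralCurve (ι := I.orderEmbOfFin rfl)
    (κ := J.orderEmbOfFin hJI) _ X₀ rfl
  refine ⟨γ, hγ0, fun k l t => ?_, fun k l => exists_poly_add_sum_of_mem_quasiExp_sup ?_⟩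
  · rw [evalM_pois_X_Delta hJI, hγA]
    exact hγ k l t
  · have hq : (I.card - 1) + (I.card - 1) = 2 * r - 2 := by omega
    have hp : 2 * r - 2 + 1 = 2 * r - 1 := by omega
    simpa only [hq, hp] using hγq k l

/-- **Completeness of determinantal Hamiltonian flows, with quasi-exponential dynamics.**
There is a global integral curve of `Δ_{I,J}` through any `X₀`, and each matrix entry
evolves as `p(t) + ∑ₐ pₐ(t) e^{αₐ t}` with `deg p ≤ 2r−1`, `deg pₐ ≤ 2r−2`, `αₐ ≠ 0`. -/
theorem determinantal_flow_complete_quasiExponential (m n : ℕ) (hm : 0 < m) (hn : 0 < n)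
    (r : ℕ) (hr : 1 ≤ r)
    (X₀ : Matrix (Fin m) (Fin n) ℂ)
    (I : Finset (Fin m)) (J : Finset (Fin n))
    (hI : I.card = r) (hJ : J.card = r) :
    ∃ γ : ℂ → Matrix (Fin m) (Fin n) ℂ,
      γ 0 = X₀ ∧
      (∀ (k : Fin m) (l : Fin n) (t : ℂ),
        HasDerivAt (fun s => γ s k l)
          (evalM (γ t) (pois (X (k, l)) (Delta I J))) t) ∧
      (∀ (k : Fin m) (l : Fin n),
        ∃ (N : ℕ) (p : Polynomial ℂ) (q : Fin N → Polynomial ℂ) (α : Fin N → ℂ),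
          p.natDegree ≤ 2 * r - 1 ∧
          (∀ a, (q a).natDegree ≤ 2 * r - 2) ∧
          (∀ a, α a ≠ 0) ∧
          ∀ t : ℂ, γ t k l = p.eval t + ∑ a, (q a).eval t * Complex.exp (α a * t)) :=
  determinantal_flow_complete_quasiExponential_general m n r hr X₀ I J hI hJ
end

section
/- Let I = {i₁ < … < i_r} ⊆ {1,…,m} and J = {j₁ < … < j_r} ⊆ {1,…,n}. For every k ∈ {1,…,m} and l ∈ {1,…,n}, one has in R_{m,n}: {x_{kl}, Δ_{I,J}} = ∑_{q=1}^{r} sign(i_q − k)·x_{i_q l}·D_q + ∑_{q=1}^{r} sign(j_q − l)·x_{k j_q}·E_q, where D_q is the determinant of the r×r matrix whose rows are indexed, in order, by (i₁, …, i_{q−1}, k, i_{q+1}, …, i_r) and whose columns are indexed by (j₁, …, j_r) (entry (a,b) being the corresponding variable x), and E_q is the determinant of the r×r matrix with rows (i₁, …, i_r) and columns, in order, (j₁, …, j_{q−1}, l, j_{q+1}, …, j_r). -/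
open MvPolynomial

/-!
Bracketing with `x_{kl}` is the derivation `D = D_row + D_col` of `R_{m,n}` determined by
`D_row x_{ij} = sign(i - k) x_{il} x_{kj}` and `D_col x_{ij} = sign(j - l) x_{kj} x_{il}`.
A derivation of a determinant is the sum over rows (or columns) of the determinants with
that row (column) differentiated. On the row `q` of `Δ_{I,J}` the derivation `D_row` acts by
the scalar `sign(i_q - k) x_{i_q l}` times the row `(x_{k j_b})_b`, which yields the first sum;
`D_col` acts on column `q` by `sign(j_q - l) x_{k j_q}` times `(x_{i_a l})_a`, which yields the
second.
-/

namespace Derivation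

theorem leibniz_prod {R A M ι : Type*} [CommSemiring R] [CommSemiring A] [AddCommMonoid M]
    [Algebra R A] [Module A M] [Module R M] [DecidableEq ι]
    (D : Derivation R A M) (s : Finset ι) (f : ι → A) :
    D (∏ i ∈ s, f i) = ∑ i ∈ s, (∏ j ∈ s.erase i, f j) • D (f i) := by
  induction s using Finset.induction_on with
  | empty => simp
  | insert a s ha ih =>
    have herase : ∀ i ∈ s, (insert a s).erase i = insert a (s.erase i) := fun i hi =>
      Finset.erase_insert_of_ne (ne_of_mem_of_not_mem hi ha).symm
    rw [Finset.prod_insert ha, leibniz, ih, Finset.sum_insert ha, Finset.erase_insert ha,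
      Finset.smul_sum, add_comm]
    congr 1
    refine Finset.sum_congr rfl fun i hi => ?_
    rw [herase i hi, Finset.prod_insert fun h => ha (Finset.mem_of_mem_erase h), mul_smul]

variable {R A : Type*} [CommSemiring R] [CommRing A] [Algebra R A] {ι : Type*} [Fintype ι]
  [DecidableEq ι]

theorem map_det_eq_sum_det_updateCol (D : Derivation R A A) (M : Matrix ι ι A) :
    D M.det = ∑ j, (M.updateCol j fun i => D (M i j)).det := by
  simp_rw [Matrix.det_apply, map_sum, Finset.sum_comm (γ := ι)]
  refine Finset.sum_congr rfl fun σ _ => ?_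
  rw [Units.smul_def, map_zsmul, leibniz_prod, Finset.smul_sum]
  refine Finset.sum_congr rfl fun j _ => ?_
  rw [Units.smul_def, ← Finset.mul_prod_erase _ _ (Finset.mem_univ j), Matrix.updateCol_self,
    smul_eq_mul, mul_comm]
  congr 2
  refine Finset.prod_congr rfl fun i hi => ?_
  rw [Matrix.updateCol_ne (Finset.ne_of_mem_erase hi)]

theorem map_det_eq_sum_det_updateRow (D : Derivation R A A) (M : Matrix ι ι A) :
    D M.det = ∑ i, (M.updateRow i fun j => D (M i j)).det := by
  rw [← Matrix.det_transpose, map_det_eq_sum_det_updateCol]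
  simp only [Matrix.transpose_apply, Matrix.updateCol_transpose, Matrix.det_transpose]

theorem map_det_eq_sum_mul_det_updateRow (D : Derivation R A A) (M N : Matrix ι ι A) (c : ι → A)
    (h : ∀ i j, D (M i j) = c i * N i j) :
    D M.det = ∑ i, c i * (M.updateRow i (N i)).det := by
  simp_rw [map_det_eq_sum_det_updateRow, h, ← Matrix.det_updateRow_smul]
  rfl

theorem map_det_eq_sum_mul_det_updateCol (D : Derivation R A A) (M N : Matrix ι ι A) (c : ι → A)
    (h : ∀ i j, D (M i j) = c j * N i j) :
    D M.det = ∑ j, c j * (M.updateCol j fun i => N i j).det := by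
  simp_rw [map_det_eq_sum_det_updateCol, h, ← Matrix.det_updateCol_smul]
  rfl

end Derivation

theorem MvPolynomial.sum_mul_pderiv_eq_mkDerivation {σ R : Type*} [CommSemiring R] [Fintype σ]
    [DecidableEq σ] (w : σ → MvPolynomial σ R) (f : MvPolynomial σ R) :
    ∑ s, w s * pderiv s f = mkDerivation R w f := by
  have apply_sum : ∀ g, (∑ s, w s • pderiv s) g = ∑ s, w s * pderiv s g := fun g => by
    rw [← Derivation.coeFnAddMonoidHom_apply, map_sum, Finset.sum_apply]
    rfl
  have h : ∑ s, w s • pderiv s = mkDerivation R w :=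
    derivation_ext fun i => by simp [apply_sum, pderiv_X, Pi.single_apply]
  rw [← apply_sum, h]

theorem pois_X_eq_mkDerivation_add {m n : ℕ} (k : Fin m) (l : Fin n) (g : MvPolynomial (Fin m × Fin n) ℂ) :
    pois (X (k, l)) g =
      mkDerivation ℂ (fun p => (((p.1 : ℤ) - k).sign) • (X (p.1, l) * X (k, p.2))) g +
        mkDerivation ℂ (fun p => (((p.2 : ℤ) - l).sign) • (X (k, p.2) * X (p.1, l))) g := by
  simp only [← sum_mul_pderiv_eq_mkDerivation, ← Finset.sum_add_distrib, pois, pderiv_X,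
    Pi.single_apply, Prod.mk.injEq, Fintype.sum_prod_type]
  simp only [ite_and, mul_ite, mul_one, mul_zero, ite_mul, zero_mul, smul_ite, zsmul_eq_mul,
    Int.cast_add, smul_zero, Finset.sum_ite_irrel, Finset.sum_const_zero, Finset.sum_ite_eq,
    Finset.mem_univ, ↓reduceIte]
  refine Finset.sum_congr rfl fun _ _ => Finset.sum_congr rfl fun _ _ => ?_
  ring

theorem Delta_eq_det {m n r : ℕ} {I : Finset (Fin m)} {J : Finset (Fin n)} (hI : I.card = r)
    (hJ : J.card = r) :
    Delta I J = (Matrix.of fun a b : Fin r =>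
      X ((I.orderIsoOfFin hI a).1, (J.orderIsoOfFin hJ b).1)).det := by
  subst hI
  rw [Delta, dif_pos hJ]

/-- **The bracket of a matrix entry with a minor** `{x_{kl}, Δ_{I,J}}` equals the sum
`∑_q sign(i_q−k)·x_{i_q l}·Δ_{I(i_q→k),J} + ∑_q sign(j_q−l)·x_{k j_q}·Δ_{I,J(j_q→l)}`,
where the replaced-row/column minors keep the rows/columns in their listed order. -/
theorem bracket_entry_minor_formula (m n : ℕ) (r : ℕ)
    (I : Finset (Fin m)) (J : Finset (Fin n))
    (hI : I.card = r) (hJ : J.card = r)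
    (k : Fin m) (l : Fin n) :
    pois (X (k, l)) (Delta I J) =
      (∑ q : Fin r,
        ((((I.orderIsoOfFin hI q).1 : ℤ) - (k : ℤ)).sign) •
          (X ((I.orderIsoOfFin hI q).1, l) *
            Matrix.det (Matrix.of fun a b : Fin r =>
              X ((if a = q then k else (I.orderIsoOfFin hI a).1),
                 (J.orderIsoOfFin hJ b).1))))
      +
      (∑ q : Fin r,
        ((((J.orderIsoOfFin hJ q).1 : ℤ) - (l : ℤ)).sign) •
          (X (k, (J.orderIsoOfFin hJ q).1) *
            Matrix.det (Matrix.of fun a b : Fin r =>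
              X ((I.orderIsoOfFin hI a).1,
                 (if b = q then l else (J.orderIsoOfFin hJ b).1))))) := by
  rw [Delta_eq_det hI hJ, pois_X_eq_mkDerivation_add]
  congr 1
  · refine (Derivation.map_det_eq_sum_mul_det_updateRow _ _
      (Matrix.of fun _ b => X (k, (J.orderIsoOfFin hJ b).1))
      (fun a => (((I.orderIsoOfFin hI a).1 : ℤ) - k).sign • X ((I.orderIsoOfFin hI a).1, l))
      fun _ _ => by rw [Matrix.of_apply, mkDerivation_X, smul_mul_assoc]; rfl).trans
      (Finset.sum_congr rfl fun q _ => ?_)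
    rw [smul_mul_assoc]
    congr 3
    ext a b : 1
    by_cases h : a = q <;> simp [h, Matrix.updateRow_apply]
  · refine (Derivation.map_det_eq_sum_mul_det_updateCol _ _
      (Matrix.of fun a _ => X ((I.orderIsoOfFin hI a).1, l))
      (fun b => (((J.orderIsoOfFin hJ b).1 : ℤ) - l).sign • X (k, (J.orderIsoOfFin hJ b).1))
      fun _ _ => by rw [Matrix.of_apply, mkDerivation_X, smul_mul_assoc]; rfl).trans
      (Finset.sum_congr rfl fun q _ => ?_)
    rw [smul_mul_assoc]
    congr 3
    ext a b : 1
    by_cases h : b = q <;> simp [h]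
end

section
/- Let I = {i₁ < … < i_r} ⊆ {1,…,m} and J = {j₁ < … < j_s} ⊆ {1,…,n}. The ℂ-algebra homomorphism φ : R_{r,s} → R_{m,n} determined by φ(y_{ab}) = x_{i_a j_b} (for 1 ≤ a ≤ r, 1 ≤ b ≤ s, where y_{ab} are the variables of R_{r,s}) is a Poisson homomorphism: φ({f, g}_{r,s}) = {φ(f), φ(g)}_{m,n} for all f, g ∈ R_{r,s}. (Equivalently, the projection of an m×n matrix to its submatrix with rows I and columns J is a Poisson map between the matrix affine Poisson spaces.) -/
open MvPolynomial

/-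
The map is `rename` along `Prod.map eI eJ`, where `eI`, `eJ` enumerate `I`, `J` increasingly.
A partial derivative of a renamed polynomial vanishes in the variables outside the image and
commutes with `rename` in those inside, so each of the four sums defining the bracket upstairs
collapses to the corresponding sum over `I` or `J`. The structure constants `sign (k - i)` depend
only on the relative order of indices, which strictly monotone enumerations preserve.
-/

lemma pderiv_rename_eq_zero_of_notMem_range {R σ τ : Type*} [CommSemiring R] [DecidableEq τ]
    {e : σ → τ} {p : τ} (hp : p ∉ Set.range e) (f : MvPolynomial σ R) :
    pderiv p (rename e f) = 0 := by
  refine pderiv_eq_zero_of_notMem_vars fun hmem => hp ?_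
  obtain ⟨q, -, rfl⟩ := Finset.mem_image.mp (vars_rename e f hmem)
  exact ⟨q, rfl⟩

lemma pderiv_rename_prodMap_eq_zero {R α β γ δ : Type*} [CommSemiring R] [DecidableEq γ]
    [DecidableEq δ] {eI : α → γ} {eJ : β → δ} {i : γ} {j : δ}
    (h : i ∉ Set.range eI ∨ j ∉ Set.range eJ) (f : MvPolynomial (α × β) R) :
    pderiv (i, j) (rename (Prod.map eI eJ) f) = 0 := by
  refine pderiv_rename_eq_zero_of_notMem_range ?_ f
  rw [Set.range_prodMap, Set.mem_prod]
  tauto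

lemma Fin.sign_sub_comp_strictMono {r m : ℕ} {e : Fin r → Fin m} (he : StrictMono e)
    (a c : Fin r) : ((e c : ℤ) - e a).sign = ((c : ℤ) - a).sign := by
  rcases lt_trichotomy a c with h | rfl | h
  · rw [Int.sign_eq_one_of_pos (sub_pos.mpr (by exact_mod_cast he h)),
      Int.sign_eq_one_of_pos (sub_pos.mpr (by exact_mod_cast h))]
  · simp
  · rw [Int.sign_eq_neg_one_of_neg (sub_neg.mpr (by exact_mod_cast he h)),
      Int.sign_eq_neg_one_of_neg (sub_neg.mpr (by exact_mod_cast h))]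

theorem rename_prodMap_pois {r s m n : ℕ} {eI : Fin r → Fin m} {eJ : Fin s → Fin n}
    (hI : StrictMono eI) (hJ : StrictMono eJ) (f g : MvPolynomial (Fin r × Fin s) ℂ) :
    rename (Prod.map eI eJ) (pois f g)
      = pois (rename (Prod.map eI eJ) f) (rename (Prod.map eI eJ) g) := by
  have hf (i : Fin m) (j : Fin n) (h : i ∉ Set.range eI ∨ j ∉ Set.range eJ) :
      pderiv (i, j) (rename (Prod.map eI eJ) f) = 0 := pderiv_rename_prodMap_eq_zero h f
  have hg (k : Fin m) (l : Fin n) (h : k ∉ Set.range eI ∨ l ∉ Set.range eJ) :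
      pderiv (k, l) (rename (Prod.map eI eJ) g) = 0 := pderiv_rename_prodMap_eq_zero h g
  simp only [pois, map_sum]
  refine Fintype.sum_of_injective eI hI.injective _ _
    (fun i hi => by simp [hf i _ (Or.inl hi)]) fun a => ?_
  refine Fintype.sum_of_injective eI hI.injective _ _
    (fun k hk => by simp [hg k _ (Or.inl hk)]) fun c => ?_
  refine Fintype.sum_of_injective eJ hJ.injective _ _
    (fun j hj => by simp [hf _ j (Or.inr hj)]) fun b => ?_
  refine Fintype.sum_of_injective eJ hJ.injective _ _
    (fun l hl => by simp [hg _ l (Or.inr hl)]) fun d => ?_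
  have hinj := hI.injective.prodMap hJ.injective
  rw [map_zsmul, Fin.sign_sub_comp_strictMono hI, Fin.sign_sub_comp_strictMono hJ]
  simp only [map_mul, rename_X, ← pderiv_rename hinj, Prod.map_apply]

theorem submatrix_projection_poisson_general (m n : ℕ) (r s : ℕ)
    (I : Finset (Fin m)) (J : Finset (Fin n))
    (hI : I.card = r) (hJ : J.card = s)
    (f g : MvPolynomial (Fin r × Fin s) ℂ) :
    rename (fun p : Fin r × Fin s => ((I.orderIsoOfFin hI p.1).1, (J.orderIsoOfFin hJ p.2).1))
        (pois f g)
      = pois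
          (rename (fun p : Fin r × Fin s =>
            ((I.orderIsoOfFin hI p.1).1, (J.orderIsoOfFin hJ p.2).1)) f)
          (rename (fun p : Fin r × Fin s =>
            ((I.orderIsoOfFin hI p.1).1, (J.orderIsoOfFin hJ p.2).1)) g) :=
  rename_prodMap_pois (eI := fun a => (I.orderIsoOfFin hI a).1)
    (eJ := fun b => (J.orderIsoOfFin hJ b).1)
    (Subtype.strictMono_coe _ |>.comp (I.orderIsoOfFin hI).strictMono)
    (Subtype.strictMono_coe _ |>.comp (J.orderIsoOfFin hJ).strictMono) f g

/-- **Projection to a submatrix is Poisson.** The ℂ-algebra homomorphism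
`R_{r,s} → R_{m,n}`, `y_{ab} ↦ x_{i_a j_b}`, intertwines the quadratic Poisson brackets. -/
theorem submatrix_projection_poisson (m n : ℕ) (hm : 0 < m) (hn : 0 < n) (r s : ℕ)
    (I : Finset (Fin m)) (J : Finset (Fin n))
    (hI : I.card = r) (hJ : J.card = s)
    (f g : MvPolynomial (Fin r × Fin s) ℂ) :
    rename (fun p : Fin r × Fin s => ((I.orderIsoOfFin hI p.1).1, (J.orderIsoOfFin hJ p.2).1))
        (pois f g)
      = pois
          (rename (fun p : Fin r × Fin s =>
            ((I.orderIsoOfFin hI p.1).1, (J.orderIsoOfFin hJ p.2).1)) f)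
          (rename (fun p : Fin r × Fin s =>
            ((I.orderIsoOfFin hI p.1).1, (J.orderIsoOfFin hJ p.2).1)) g) :=
  submatrix_projection_poisson_general m n r s I J hI hJ f g
end

section
/- Let I = {i₁ < … < i_r} ⊆ {1,…,m} and J = {j₁ < … < j_s} ⊆ {1,…,n}. The ℂ-algebra homomorphism ψ : R_{m,n} → R_{r,s} determined by ψ(x_{i_a j_b}) = y_{ab} (for 1 ≤ a ≤ r, 1 ≤ b ≤ s, where y_{ab} are the variables of R_{r,s}) and ψ(x_{ij}) = 0 whenever i ∉ I or j ∉ J, is a Poisson homomorphism: ψ({f, g}_{m,n}) = {ψ(f), ψ(g)}_{r,s} for all f, g ∈ R_{m,n}. (Equivalently, the embedding of an r×s matrix as the (I,J)-submatrix of an m×n matrix, with all other entries zero, is a Poisson map between the matrix affine Poisson spaces.) -/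
open MvPolynomial

/-!
`ψ` kills every variable outside the `(I, J)`-block and relabels the variables inside it in an
order-preserving way. Hence `∂/∂y_{ab} ∘ ψ = ψ ∘ ∂/∂x_{i_a j_b}` (both sides are `ψ`-derivations
agreeing on the variables), every term of `{f, g}` with an index outside `I` or `J` is killed by
`ψ` through its factor `x_{il} x_{kj}`, and the surviving terms are those of `{ψ f, ψ g}`, since
the signs only see the relative order of the indices.
-/

section PartialDerivative

variable {R σ τ : Type*} [CommSemiring R] (ψ : MvPolynomial σ R →ₐ[R] MvPolynomial τ R)

theorem pderiv_algHom_eq_of_forall_X {p : σ} {q : τ}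
    (h : ∀ p', pderiv q (ψ (X p')) = ψ (pderiv p (X p'))) (f : MvPolynomial σ R) :
    pderiv q (ψ f) = ψ (pderiv p f) := by
  induction f using MvPolynomial.induction_on with
  | C a => simp
  | add f g hf hg => simp only [map_add, hf, hg]
  | mul_X f p' hf => simp only [map_mul, pderiv_mul, map_add, hf, h]

theorem pderiv_algHom_of_injective {e : τ → σ} (he : e.Injective)
    (hX : ∀ q, ψ (X (e q)) = X q) (h0 : ∀ p ∉ Set.range e, ψ (X p) = 0)
    (q : τ) (f : MvPolynomial σ R) :
    pderiv q (ψ f) = ψ (pderiv (e q) f) := by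
  refine pderiv_algHom_eq_of_forall_X ψ (fun p => ?_) f
  by_cases hp : p ∈ Set.range e
  · obtain ⟨q', rfl⟩ := hp
    rcases eq_or_ne q' q with rfl | hne
    · simp [hX]
    · rw [hX, pderiv_X_of_ne hne, pderiv_X_of_ne (he.ne hne), map_zero]
  · rw [h0 p hp, pderiv_X_of_ne fun h => hp ⟨q, h.symm⟩, map_zero, map_zero]

end PartialDerivative

theorem Int.sign_sub_orderEmbedding {r m : ℕ} (u : Fin r ↪o Fin m) (i k : Fin r) :
    (((u k : ℕ) : ℤ) - (u i : ℕ)).sign = (((k : ℕ) : ℤ) - (i : ℕ)).sign := by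
  rcases lt_trichotomy i k with h | rfl | h
  · have : (u i : ℕ) < u k := u.lt_iff_lt.mpr h
    have : (i : ℕ) < k := h
    rw [Int.sign_eq_one_of_pos (by omega), Int.sign_eq_one_of_pos (by omega)]
  · simp
  · have : (u k : ℕ) < u i := u.lt_iff_lt.mpr h
    have : (k : ℕ) < i := h
    rw [Int.sign_eq_neg_one_of_neg (by omega), Int.sign_eq_neg_one_of_neg (by omega)]

theorem pois_map_of_submatrix {m n r s : ℕ} (u : Fin r ↪o Fin m) (v : Fin s ↪o Fin n)
    (ψ : MvPolynomial (Fin m × Fin n) ℂ →ₐ[ℂ] MvPolynomial (Fin r × Fin s) ℂ)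
    (hX : ∀ a b, ψ (X (u a, v b)) = X (a, b))
    (hrow : ∀ i ∉ Set.range u, ∀ j, ψ (X (i, j)) = 0)
    (hcol : ∀ j ∉ Set.range v, ∀ i, ψ (X (i, j)) = 0)
    (f g : MvPolynomial (Fin m × Fin n) ℂ) :
    ψ (pois f g) = pois (ψ f) (ψ g) := by
  have hpderiv : ∀ a b h, pderiv (a, b) (ψ h) = ψ (pderiv (u a, v b) h) :=
    fun a b => pderiv_algHom_of_injective ψ (e := Prod.map u v)
      (u.injective.prodMap v.injective) (fun q => hX q.1 q.2) (by
        rintro ⟨i, j⟩ hij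
        rw [Set.range_prodMap, Set.mem_prod, not_and_or] at hij
        exact hij.elim (fun hi => hrow i hi j) (fun hj => hcol j hj i)) (a, b)
  simp only [pois, map_sum, map_zsmul, map_mul, hpderiv, ← hX]
  symm
  refine Fintype.sum_of_injective u u.injective _ _ (fun i hi => ?_) fun a => ?_
  · simp [hrow i hi]
  refine Fintype.sum_of_injective u u.injective _ _ (fun k hk => ?_) fun a' => ?_
  · simp [hrow k hk]
  refine Fintype.sum_of_injective v v.injective _ _ (fun j hj => ?_) fun b => ?_
  · simp [hcol j hj]
  refine Fintype.sum_of_injective v v.injective _ _ (fun l hl => ?_) fun b' => ?_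
  · simp [hcol l hl]
  rw [Int.sign_sub_orderEmbedding, Int.sign_sub_orderEmbedding]

theorem submatrix_embedding_poisson_general (m n : ℕ) (r s : ℕ)
    (I : Finset (Fin m)) (J : Finset (Fin n))
    (hI : I.card = r) (hJ : J.card = s)
    (ψ : MvPolynomial (Fin m × Fin n) ℂ →ₐ[ℂ] MvPolynomial (Fin r × Fin s) ℂ)
    (hψ : ∀ (i : Fin m) (j : Fin n),
      ψ (X (i, j)) =
        if h : i ∈ I ∧ j ∈ J then
          X ((I.orderIsoOfFin hI).symm ⟨i, h.1⟩, (J.orderIsoOfFin hJ).symm ⟨j, h.2⟩)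
        else 0)
    (f g : MvPolynomial (Fin m × Fin n) ℂ) :
    ψ (pois f g) = pois (ψ f) (ψ g) := by
  refine pois_map_of_submatrix (I.orderEmbOfFin hI) (J.orderEmbOfFin hJ) ψ
    (fun a b => ?_) (fun i hi j => ?_) (fun j hj i => ?_) f g
  · rw [hψ, dif_pos ⟨I.orderEmbOfFin_mem hI a, J.orderEmbOfFin_mem hJ b⟩]
    simp [← Finset.coe_orderIsoOfFin_apply]
  · rw [hψ, dif_neg fun h => hi (by simpa using h.1)]
  · rw [hψ, dif_neg fun h => hj (by simpa using h.2)]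

/-- **Embedding as a submatrix (other entries zero) is Poisson.** The ℂ-algebra
homomorphism `ψ : R_{m,n} → R_{r,s}` with `ψ(x_{i_a j_b}) = y_{ab}` and `ψ(x_{ij}) = 0`
for `i ∉ I` or `j ∉ J` intertwines the quadratic Poisson brackets. -/
theorem submatrix_embedding_poisson (m n : ℕ) (hm : 0 < m) (hn : 0 < n) (r s : ℕ)
    (I : Finset (Fin m)) (J : Finset (Fin n))
    (hI : I.card = r) (hJ : J.card = s)
    (ψ : MvPolynomial (Fin m × Fin n) ℂ →ₐ[ℂ] MvPolynomial (Fin r × Fin s) ℂ)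
    (hψ : ∀ (i : Fin m) (j : Fin n),
      ψ (X (i, j)) =
        if h : i ∈ I ∧ j ∈ J then
          X ((I.orderIsoOfFin hI).symm ⟨i, h.1⟩, (J.orderIsoOfFin hJ).symm ⟨j, h.2⟩)
        else 0)
    (f g : MvPolynomial (Fin m × Fin n) ℂ) :
    ψ (pois f g) = pois (ψ f) (ψ g) :=
  submatrix_embedding_poisson_general m n r s I J hI hJ ψ hψ f g
end

section
/- In R_n the following polynomial identities hold for all 1 ≤ i, j ≤ n: (i) {Δ_n, x_{ij}} = 0; and (ii) for every 1 ≤ k ≤ n−1, Δ'_{n;n−k}·{Δ_{n;k}, x_{ij}} = Δ_{n;k}·{Δ'_{n;n−k}, x_{ij}}. (Equivalently, Δ_n and each ratio Δ_{n;k}/Δ'_{n;n−k} are Casimirs of the quadratic Poisson bracket, i.e., belong to the Poisson center of ℂ(M_n).) -/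
open MvPolynomial

/-- The coordinate ring `R_n = ℂ[x_{ij}]` of `M_n`. -/
abbrev Rn (n : ℕ) := MvPolynomial (Fin n × Fin n) ℂ

/-- The field of rational functions `F_n = ℂ(M_n)`. -/
abbrev Fn (n : ℕ) := FractionRing (Rn n)

/-- The interval `[a,b]` (in 1-based indexing) inside `{1,…,n}`, as a finset of `Fin n`. -/
def iv (n a b : ℕ) : Finset (Fin n) :=
  Finset.univ.filter fun i => a ≤ (i : ℕ) + 1 ∧ (i : ℕ) + 1 ≤ b

/-- `Δ_{l;k}`: the upper-right `k×k` minor of the principal `l×l` submatrix. -/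
noncomputable def Dul (n l k : ℕ) : Rn n := Delta (iv n 1 k) (iv n (l - k + 1) l)

/-- `Δ'_{l;k}`: the lower-left `k×k` minor of the principal `l×l` submatrix. -/
noncomputable def Dll (n l k : ℕ) : Rn n := Delta (iv n (l - k + 1) l) (iv n 1 k)

/-- `Δ_l`: the principal `l×l` minor. -/
noncomputable def Dpr (n l : ℕ) : Rn n := Delta (iv n 1 l) (iv n 1 l)

/-- The extension of the quadratic Poisson bracket to the field of rational functions,
determined by `{P/Q, S/T} = ({P,S}QT − {P,T}QS − {Q,S}PT + {Q,T}PS)/(Q²T²)`. -/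
noncomputable def poisF (n : ℕ) (f g : Fn n) : Fn n :=
  let φ := algebraMap (Rn n) (Fn n)
  let P := (IsLocalization.sec (nonZeroDivisors (Rn n)) f).1
  let Q := ((IsLocalization.sec (nonZeroDivisors (Rn n)) f).2 : Rn n)
  let S := (IsLocalization.sec (nonZeroDivisors (Rn n)) g).1
  let T := ((IsLocalization.sec (nonZeroDivisors (Rn n)) g).2 : Rn n)
  (φ (pois P S) * φ Q * φ T - φ (pois P T) * φ Q * φ S
    - φ (pois Q S) * φ P * φ T + φ (pois Q T) * φ P * φ S)
    / (φ Q ^ 2 * φ T ^ 2)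

/-!
Jacobi's formula gives, for the minor `Δ = det (x_{r t, s u})`,
`{Δ, x_{pq}} = ∑_{t,u} (sign (p - r t) + sign (q - s u)) x_{r t, q} x_{p, s u} (adj)_{u t}`.
When the rows `r` of a minor form an interval, `sign (p - r t)` is the same for all `t` unless
`p` is one of the rows, and in that case `∑_u x_{p, s u} (adj)_{u t}` vanishes for `r t ≠ p`
(an expansion along a repeated row); the columns behave alike. So `{Δ, x_{pq}} = (ε + η) B`
for the side signs `ε, η ∈ {-1, 0, 1}` of `p` and `q`, and `B = x_{pq} Δ` as soon as `p` is a
row or `q` a column. For `Δₙ` both signs vanish, and for the corner minors `Δ_{n;k}` and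
`Δ'_{n;n-k}` the coefficients `ε + η` coincide for every `(p, q)`, which gives both identities.
-/

open Matrix Finset

theorem Derivation.leibniz_prod_s10 {R A M : Type*} [CommSemiring R] [CommSemiring A]
    [AddCommMonoid M] [Algebra R A] [Module A M] [Module R M] (D : Derivation R A M)
    {ι : Type*} [DecidableEq ι] (s : Finset ι) (f : ι → A) :
    D (∏ i ∈ s, f i) = ∑ i ∈ s, (∏ j ∈ s.erase i, f j) • D (f i) := by
  induction s using Finset.induction_on with
  | empty => simp
  | insert a s ha ih =>
    rw [prod_insert ha, D.leibniz, ih, sum_insert ha, erase_insert ha, smul_sum, add_comm]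
    congr 1
    refine sum_congr rfl fun i hi => ?_
    rw [erase_insert_of_ne (ne_of_mem_of_not_mem hi ha).symm,
      prod_insert fun h => ha (mem_of_mem_erase h), smul_smul]

theorem Derivation.map_det_s10 {R A : Type*} [CommRing R] [CommRing A] [Algebra R A]
    {ι : Type*} [Fintype ι] [DecidableEq ι] (D : Derivation R A A) (M : Matrix ι ι A) :
    D M.det = ∑ i, ∑ j, M.adjugate j i * D (M i j) := by
  have hcol : ∀ j, ∑ i, M.adjugate j i * D (M i j) =
      (M.updateCol j fun i => D (M i j)).det := by
    intro j
    rw [← cramer_apply, cramer_eq_adjugate_mulVec]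
    rfl
  rw [sum_comm, Fintype.sum_congr _ _ hcol, det_apply, map_sum]
  simp_rw [det_apply, Units.smul_def, map_zsmul, D.leibniz_prod_s10, smul_eq_mul]
  rw [sum_comm]
  refine sum_congr rfl fun σ _ => ?_
  rw [smul_sum]
  refine sum_congr rfl fun j _ => ?_
  rw [← mul_prod_erase univ _ (mem_univ j), updateCol_self, mul_comm]
  congr 2
  exact prod_congr rfl fun j' hj' => (updateCol_ne (ne_of_mem_erase hj')).symm

theorem Matrix.sum_mul_adjugate_apply_s10 {R ι : Type*} [CommRing R] [Fintype ι] [DecidableEq ι]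
    (A : Matrix ι ι R) (i j : ι) :
    ∑ k, A i k * A.adjugate k j = if i = j then A.det else 0 := by
  simpa [mul_apply, one_apply] using congr_fun₂ (mul_adjugate A) i j

theorem Matrix.sum_adjugate_mul_apply_s10 {R ι : Type*} [CommRing R] [Fintype ι] [DecidableEq ι]
    (A : Matrix ι ι R) (i j : ι) :
    ∑ k, A.adjugate i k * A k j = if i = j then A.det else 0 := by
  simpa [mul_apply, one_apply] using congr_fun₂ (adjugate_mul A) i j

theorem pois_X_eq_sum {m n : ℕ} (f : MvPolynomial (Fin m × Fin n) ℂ) (p : Fin m) (q : Fin n) :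
    pois f (X (p, q)) = ∑ i : Fin m, ∑ j : Fin n,
      (((p : ℤ) - (i : ℤ)).sign + ((q : ℤ) - (j : ℤ)).sign) •
        (X (i, q) * X (p, j) * pderiv (i, j) f) := by
  refine sum_congr rfl fun i _ => ?_
  rw [sum_comm]
  refine sum_congr rfl fun j _ => ?_
  simp [pderiv_X, Pi.single_apply, ite_and]

def OnSide {ι : Type*} {k : ℕ} (ε : ℤ) (p : Fin k) (f : ι → Fin k) : Prop :=
  (p ∈ Set.range f ∧ ε = 0) ∨ ∀ t, ((p : ℤ) - (f t : ℤ)).sign = ε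

section Minor

variable {m n : ℕ} {ι : Type*} [Fintype ι] [DecidableEq ι]
variable (r : ι → Fin m) (s : ι → Fin n)

theorem pois_det_submatrix_X (p : Fin m) (q : Fin n) :
    pois ((mvPolynomialX (Fin m) (Fin n) ℂ).submatrix r s).det (X (p, q)) = ∑ t, ∑ u,
      (((p : ℤ) - (r t : ℤ)).sign + ((q : ℤ) - (s u : ℤ)).sign) •
        (X (r t, q) * X (p, s u) *
          ((mvPolynomialX (Fin m) (Fin n) ℂ).submatrix r s).adjugate u t) := by
  rw [pois_X_eq_sum]
  simp only [(pderiv _).map_det_s10, submatrix_apply, mvPolynomialX_apply, pderiv_X, mul_sum,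
    smul_sum]
  conv_lhs => enter [2, i]; rw [sum_comm]
  rw [sum_comm]
  conv_lhs => enter [2, t, 2, i]; rw [sum_comm]
  conv_lhs => enter [2, t]; rw [sum_comm]
  refine sum_congr rfl fun t _ => sum_congr rfl fun u _ => ?_
  simp [Pi.single_apply, ite_and]

/-- By Schur's formula this is `x_{pq} Δ` minus the determinant of the matrix of the minor
bordered by the row `x_{p, s ·}`, the column `x_{r ·, q}` and the corner `x_{pq}`. -/
noncomputable def borderTerm (p : Fin m) (q : Fin n) : MvPolynomial (Fin m × Fin n) ℂ :=
  ∑ t, ∑ u, X (r t, q) * X (p, s u) *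
    ((mvPolynomialX (Fin m) (Fin n) ℂ).submatrix r s).adjugate u t

variable {r s}

theorem sum_sign_row_smul {ε : ℤ} {p : Fin m} (q : Fin n) (h : OnSide ε p r) :
    ∑ t, ∑ u, ((p : ℤ) - (r t : ℤ)).sign •
        (X (r t, q) * X (p, s u) *
          ((mvPolynomialX (Fin m) (Fin n) ℂ).submatrix r s).adjugate u t)
      = ε • borderTerm r s p q := by
  rcases h with ⟨⟨t₀, rfl⟩, rfl⟩ | h
  · rw [zero_smul]
    refine sum_eq_zero fun t _ => ?_
    have key := ((mvPolynomialX (Fin m) (Fin n) ℂ).submatrix r s).sum_mul_adjugate_apply_s10 t₀ t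
    simp only [submatrix_apply, mvPolynomialX_apply] at key
    simp_rw [← smul_sum, mul_assoc, ← mul_sum, key]
    split_ifs with ht <;> simp [ht]
  · simp [h, borderTerm, smul_sum]

theorem sum_sign_col_smul {η : ℤ} (p : Fin m) {q : Fin n} (h : OnSide η q s) :
    ∑ t, ∑ u, ((q : ℤ) - (s u : ℤ)).sign •
        (X (r t, q) * X (p, s u) *
          ((mvPolynomialX (Fin m) (Fin n) ℂ).submatrix r s).adjugate u t)
      = η • borderTerm r s p q := by
  rcases h with ⟨⟨u₀, rfl⟩, rfl⟩ | h
  · rw [zero_smul, sum_comm]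
    refine sum_eq_zero fun u _ => ?_
    have key := ((mvPolynomialX (Fin m) (Fin n) ℂ).submatrix r s).sum_adjugate_mul_apply_s10 u u₀
    simp only [submatrix_apply, mvPolynomialX_apply] at key
    simp_rw [← smul_sum, mul_comm (X (r _, s u₀)), mul_assoc, ← mul_sum,
      mul_comm (X (r _, s u₀)), key]
    split_ifs with hu <;> simp [hu]
  · simp [h, borderTerm, smul_sum]

theorem borderTerm_of_mem_range_left {p : Fin m} (q : Fin n) (hp : p ∈ Set.range r) :
    borderTerm r s p q = X (p, q) * ((mvPolynomialX (Fin m) (Fin n) ℂ).submatrix r s).det := by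
  obtain ⟨t₀, rfl⟩ := hp
  have key := ((mvPolynomialX (Fin m) (Fin n) ℂ).submatrix r s).sum_mul_adjugate_apply_s10 t₀
  simp only [submatrix_apply, mvPolynomialX_apply] at key
  simp_rw [borderTerm, mul_assoc, ← mul_sum, key]
  simp

theorem borderTerm_of_mem_range_right (p : Fin m) {q : Fin n} (hq : q ∈ Set.range s) :
    borderTerm r s p q = X (p, q) * ((mvPolynomialX (Fin m) (Fin n) ℂ).submatrix r s).det := by
  obtain ⟨u₀, rfl⟩ := hq
  have key := ((mvPolynomialX (Fin m) (Fin n) ℂ).submatrix r s).sum_adjugate_mul_apply_s10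
  simp only [submatrix_apply, mvPolynomialX_apply] at key
  rw [borderTerm, sum_comm]
  simp_rw [mul_comm (X (r _, s u₀)), mul_assoc, ← mul_sum, mul_comm (X (r _, s u₀)), key]
  simp

theorem pois_det_submatrix_X_of_onSide {ε η : ℤ} {p : Fin m} {q : Fin n} (hp : OnSide ε p r)
    (hq : OnSide η q s) :
    pois ((mvPolynomialX (Fin m) (Fin n) ℂ).submatrix r s).det (X (p, q))
      = (ε + η) • borderTerm r s p q := by
  simp only [pois_det_submatrix_X, add_smul, sum_add_distrib, sum_sign_row_smul q hp,
    sum_sign_col_smul p hq]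

theorem pois_det_submatrix_X_eq_smul {ε η : ℤ} {p : Fin m} {q : Fin n} (hp : OnSide ε p r)
    (hq : OnSide η q s) (h : ε + η = 0 ∨ p ∈ Set.range r ∨ q ∈ Set.range s) :
    pois ((mvPolynomialX (Fin m) (Fin n) ℂ).submatrix r s).det (X (p, q))
      = (ε + η) • (X (p, q) * ((mvPolynomialX (Fin m) (Fin n) ℂ).submatrix r s).det) := by
  rw [pois_det_submatrix_X_of_onSide hp hq]
  rcases h with h | h | h
  · simp [h]
  · rw [borderTerm_of_mem_range_left q h]
  · rw [borderTerm_of_mem_range_right p h]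

end Minor

section Segment

variable {m n : ℕ}

def segmentEmb (a c : ℕ) (h : a + c ≤ m) : Fin c ↪o Fin m :=
  (Fin.natAddOrderEmb a).trans (Fin.castLEOrderEmb h)

@[simp]
theorem coe_segmentEmb_apply (a c : ℕ) (h : a + c ≤ m) (t : Fin c) :
    (segmentEmb a c h t : ℕ) = a + t :=
  rfl

def sideSign (a c p : ℕ) : ℤ := if p < a then -1 else if p < a + c then 0 else 1

theorem mem_range_segmentEmb (a c : ℕ) (h : a + c ≤ m) (p : Fin m) (hp : sideSign a c p = 0) :
    p ∈ Set.range (segmentEmb a c h) := by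
  have hp' : a ≤ p ∧ p < a + c := by
    unfold sideSign at hp
    split_ifs at hp <;> omega
  exact ⟨⟨p - a, by omega⟩, Fin.ext (by simp only [coe_segmentEmb_apply]; omega)⟩

theorem onSide_segmentEmb (a c : ℕ) (h : a + c ≤ m) (p : Fin m) :
    OnSide (sideSign a c p) p (segmentEmb a c h) := by
  unfold OnSide sideSign
  split_ifs with h₁ h₂
  · exact Or.inr fun t => Int.sign_eq_neg_one_of_neg (by rw [coe_segmentEmb_apply]; omega)
  · exact Or.inl ⟨mem_range_segmentEmb a c h p (by simp [sideSign, h₁, h₂]), rfl⟩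
  · exact Or.inr fun t => Int.sign_eq_one_of_pos (by rw [coe_segmentEmb_apply]; omega)

theorem iv_eq_map_segmentEmb (a c : ℕ) (h : a + c ≤ m) :
    iv m (a + 1) (a + c) = univ.map (segmentEmb a c h).toEmbedding := by
  ext p
  simp only [iv, mem_filter, mem_univ, true_and, mem_map, RelEmbedding.coe_toEmbedding]
  constructor
  · rintro ⟨h₁, h₂⟩
    exact ⟨⟨p - a, by omega⟩, Fin.ext (by simp only [coe_segmentEmb_apply]; omega)⟩
  · rintro ⟨t, rfl⟩
    simp only [coe_segmentEmb_apply]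
    omega

end Segment

section Delta

variable {m n c : ℕ}

theorem Delta_eq_det_submatrix {I : Finset (Fin m)} {J : Finset (Fin n)} (hI : I.card = c)
    (hJ : J.card = c) {f : Fin c ↪o Fin m} {g : Fin c ↪o Fin n} (hf : ∀ t, f t ∈ I)
    (hg : ∀ t, g t ∈ J) :
    Delta I J = ((mvPolynomialX (Fin m) (Fin n) ℂ).submatrix f g).det := by
  subst hI
  rw [Delta, dif_pos hJ, orderEmbOfFin_unique' rfl hf, orderEmbOfFin_unique' hJ hg]
  rfl

theorem Delta_map_univ (f : Fin c ↪o Fin m) (g : Fin c ↪o Fin n) :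
    Delta (univ.map f.toEmbedding) (univ.map g.toEmbedding)
      = ((mvPolynomialX (Fin m) (Fin n) ℂ).submatrix f g).det :=
  Delta_eq_det_submatrix (by simp) (by simp) (fun t => mem_map_of_mem _ (mem_univ t))
    (fun t => mem_map_of_mem _ (mem_univ t))

theorem pois_Delta_iv_X {a b : ℕ} (ha : a + c ≤ m) (hb : b + c ≤ n) (p : Fin m) (q : Fin n)
    (h : sideSign a c p + sideSign b c q = 0 ∨ sideSign a c p = 0 ∨ sideSign b c q = 0) :
    pois (Delta (iv m (a + 1) (a + c)) (iv n (b + 1) (b + c))) (X (p, q))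
      = (sideSign a c p + sideSign b c q) •
          (X (p, q) * Delta (iv m (a + 1) (a + c)) (iv n (b + 1) (b + c))) := by
  rw [iv_eq_map_segmentEmb a c ha, iv_eq_map_segmentEmb b c hb, Delta_map_univ]
  exact pois_det_submatrix_X_eq_smul (onSide_segmentEmb a c ha p) (onSide_segmentEmb b c hb q) <|
    h.imp_right (Or.imp (mem_range_segmentEmb a c ha p) (mem_range_segmentEmb b c hb q))

end Delta

theorem casimirs_of_quadratic_bracket_general (n : ℕ) :
    (∀ i j : Fin n, pois (Dpr n n) (X (i, j)) = 0) ∧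
    (∀ k : ℕ, 1 ≤ k → k ≤ n - 1 → ∀ i j : Fin n,
      Dll n n (n - k) * pois (Dul n n k) (X (i, j))
        = Dul n n k * pois (Dll n n (n - k)) (X (i, j))) := by
  constructor
  · intro p q
    have hD : Dpr n n = Delta (iv n (0 + 1) (0 + n)) (iv n (0 + 1) (0 + n)) := by
      rw [Dpr, zero_add, zero_add]
    have hp : sideSign 0 n p = 0 := by simp [sideSign]
    have hq : sideSign 0 n q = 0 := by simp [sideSign]
    rw [hD, pois_Delta_iv_X (by omega) (by omega) p q (Or.inr (Or.inl hp)), hp, hq, add_zero,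
      zero_smul]
  · intro k _ hk p q
    have hp := p.isLt
    have hq := q.isLt
    have hA : Dul n n k = Delta (iv n (0 + 1) (0 + k)) (iv n (n - k + 1) (n - k + k)) := by
      rw [Dul, zero_add, zero_add, Nat.sub_add_cancel (by omega)]
    have hB : Dll n n (n - k) =
        Delta (iv n (k + 1) (k + (n - k))) (iv n (0 + 1) (0 + (n - k))) := by
      rw [Dll, zero_add, zero_add, Nat.sub_sub_self (by omega), Nat.add_sub_cancel' (by omega)]
    have hcoef : sideSign 0 k p + sideSign (n - k) k q
        = sideSign k (n - k) p + sideSign 0 (n - k) q := by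
      simp only [sideSign]; split_ifs <;> omega
    rw [hA, hB,
      pois_Delta_iv_X (by omega) (by omega) p q (by simp only [sideSign]; split_ifs <;> omega),
      pois_Delta_iv_X (by omega) (by omega) p q (by simp only [sideSign]; split_ifs <;> omega),
      hcoef, mul_smul_comm, mul_smul_comm]
    ring

/-- **`Δₙ` and the ratios `Δ_{n;k}/Δ'_{n;n−k}` are Casimirs** of the quadratic Poisson
bracket: (i) `{Δₙ, x_{ij}} = 0`, and (ii) `Δ'_{n;n−k}·{Δ_{n;k}, x_{ij}} =
Δ_{n;k}·{Δ'_{n;n−k}, x_{ij}}` for all `1 ≤ k ≤ n−1` and all `i, j`. -/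
theorem casimirs_of_quadratic_bracket (n : ℕ) (hn : 0 < n) :
    (∀ i j : Fin n, pois (Dpr n n) (X (i, j)) = 0) ∧
    (∀ k : ℕ, 1 ≤ k → k ≤ n - 1 → ∀ i j : Fin n,
      Dll n n (n - k) * pois (Dul n n k) (X (i, j))
        = Dul n n k * pois (Dll n n (n - k)) (X (i, j))) :=
  casimirs_of_quadratic_bracket_general n
end

section
/- The fraction field F_n is generated as a field extension of ℂ by the Gelfand–Zeitlin Hamiltonians together with the strictly lower-triangular variables: the subfield of F_n generated by ℂ, the set {Δ_{l;k}/Δ'_{l;l−k} : 1 ≤ k < l ≤ n}, the set {Δ_l : 1 ≤ l ≤ n}, and the set {x_{ij} : 1 ≤ j < i ≤ n} is all of F_n. -/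
/-!
Recover the entries of the generic matrix column by column, from left to right. Entries below the
diagonal are generators. In column `l`, the entry `x_{kl}` with `k < l` is the bottom-right
corner of `Δ_{l;k}` (rows `[1,k]`, columns `[l-k+1,l]`), whose other entries lie in earlier
columns or higher up in column `l`; and `Δ_{l;k}` itself is the generator `Δ_{l;k}/Δ'_{l;l-k}`
times `Δ'_{l;l-k}`, which only involves the columns `[1,l-k]`. The diagonal entry `x_{ll}` is the
corner of `Δ_l`. A determinant is affine in its corner entry, with slope the complementary minor,
a nonzero generic minor, so the corner is recovered from the determinant and the other entries.
-/

open MvPolynomial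

/-- The Gelfand–Zeitlin Hamiltonians for the quadratic Poisson structure, as a subset of
the field of rational functions `F_n`: the ratios `Δ_{l;k}/Δ'_{l;l−k}` for
`1 ≤ k < l ≤ n` together with the principal minors `Δ_l` for `1 ≤ l ≤ n`. -/
noncomputable def GZset (n : ℕ) : Set (Fn n) :=
  {g | ∃ k l, 1 ≤ k ∧ k < l ∧ l ≤ n ∧
      g = algebraMap (Rn n) (Fn n) (Dul n l k) / algebraMap (Rn n) (Fn n) (Dll n l (l - k))}
    ∪ {g | ∃ l, 1 ≤ l ∧ l ≤ n ∧ g = algebraMap (Rn n) (Fn n) (Dpr n l)}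

open Matrix

theorem Matrix.det_submatrix_mvPolynomialX_ne_zero {m n ι R : Type*} [Fintype ι] [DecidableEq ι]
    [CommRing R] [Nontrivial R] {r : ι → m} {c : ι → n}
    (hr : Function.Injective r) (hc : Function.Injective c) :
    ((mvPolynomialX m n R).submatrix r c).det ≠ 0 := by
  have h : (mvPolynomialX m n R).submatrix r c
      = (rename (Prod.map r c)).toRingHom.mapMatrix (mvPolynomialX ι ι R) := by
    ext a b; simp [mvPolynomialX_apply]
  rw [h, ← RingHom.map_det]
  exact (map_ne_zero_iff _ (rename_injective _ (hr.prodMap hc))).mpr (det_mvPolynomialX_ne_zero ι R)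

theorem Matrix.det_mem_of_forall_mem {R S ι : Type*} [CommRing R] [SetLike S R] [SubringClass S R]
    [Fintype ι] [DecidableEq ι] {s : S} {M : Matrix ι ι R} (h : ∀ i j, M i j ∈ s) :
    M.det ∈ s := by
  have : M = (SubringClass.subtype s).mapMatrix (Matrix.of fun i j => (⟨M i j, h i j⟩ : s)) := by
    ext i j; rfl
  rw [this, ← RingHom.map_det]
  exact SetLike.coe_mem _

theorem Matrix.last_last_mem_of_det_mem {K S : Type*} [Field K] [SetLike S K] [SubfieldClass S K]
    {s : S} {m : ℕ} {M : Matrix (Fin (m + 1)) (Fin (m + 1)) K}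
    (hM : ∀ i j, (i ≠ Fin.last m ∨ j ≠ Fin.last m) → M i j ∈ s)
    (hminor : (M.submatrix Fin.castSucc Fin.castSucc).det ≠ 0) (hdet : M.det ∈ s) :
    M (Fin.last m) (Fin.last m) ∈ s := by
  have hrow : ∀ j, (M.submatrix Fin.castSucc j).det ∈ s := fun j =>
    det_mem_of_forall_mem fun a b => hM _ _ (Or.inl (Fin.castSucc_ne_last a))
  set c := (-1 : K) ^ (m + m) * (M.submatrix Fin.castSucc Fin.castSucc).det
  set rest := ∑ j : Fin m, (-1 : K) ^ (m + j : ℕ) * M (Fin.last m) j.castSucc *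
      (M.submatrix Fin.castSucc (j.castSucc.succAbove)).det
  have hexp : M.det = rest + M (Fin.last m) (Fin.last m) * c := by
    rw [det_succ_row M (Fin.last m), Fin.sum_univ_castSucc]
    simp only [Fin.succAbove_last, Fin.val_last, Fin.val_castSucc, rest, c]
    ring
  have hrest : rest ∈ s := sum_mem fun j _ =>
    mul_mem (mul_mem (pow_mem (neg_mem (one_mem s)) _) (hM _ _ (Or.inr (Fin.castSucc_ne_last j))))
      (hrow _)
  have hc : c ∈ s := mul_mem (pow_mem (neg_mem (one_mem s)) _) (hrow _)
  have hc0 : c ≠ 0 := mul_ne_zero (pow_ne_zero _ (neg_ne_zero.mpr one_ne_zero)) hminor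
  rw [eq_div_of_mul_eq hc0 (eq_sub_of_add_eq' hexp.symm)]
  exact div_mem (sub_mem hdet hrest) hc

theorem IntermediateField.eq_top_of_algebraMap_X_mem {σ K : Type*} [Field K]
    {E : IntermediateField K (FractionRing (MvPolynomial σ K))}
    (hX : ∀ s, algebraMap (MvPolynomial σ K) _ (X s) ∈ E) : E = ⊤ := by
  have hpoly : ∀ p : MvPolynomial σ K, algebraMap _ (FractionRing (MvPolynomial σ K)) p ∈ E := by
    intro p
    induction p using MvPolynomial.induction_on with
    | C c =>
      rw [← MvPolynomial.algebraMap_eq, ← IsScalarTower.algebraMap_apply]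
      exact E.algebraMap_mem c
    | add p q hp hq => rw [map_add]; exact add_mem hp hq
    | mul_X p s hp => rw [map_mul]; exact mul_mem hp (hX s)
  refine eq_top_iff.mpr fun f _ => ?_
  obtain ⟨p, q, -, rfl⟩ := IsFractionRing.div_surjective (A := MvPolynomial σ K) f
  exact div_mem (hpoly p) (hpoly q)

namespace GZ

variable {n : ℕ}

def shift (p : ℕ) {m : ℕ} (h : p + m ≤ n) (s : Fin m) : Fin n := ⟨p + s, by omega⟩

@[simp] lemma val_shift (p : ℕ) {m : ℕ} (h : p + m ≤ n) (s : Fin m) :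
    (shift p h s : ℕ) = p + s := rfl

lemma shift_injective (p : ℕ) {m : ℕ} (h : p + m ≤ n) : Function.Injective (shift p h) :=
  fun s t hst => Fin.ext (by simpa using congrArg Fin.val hst)

lemma iv_eq_image_shift (p : ℕ) {m : ℕ} (h : p + m ≤ n) :
    iv n (p + 1) (p + m) = Finset.univ.image (shift p h) := by
  ext i
  simp only [iv, Finset.mem_filter, Finset.mem_univ, true_and, Finset.mem_image]
  constructor
  · rintro ⟨h1, h2⟩
    exact ⟨⟨i - p, by omega⟩, Fin.ext (by simp; omega)⟩
  · rintro ⟨s, -, rfl⟩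
    simp

lemma card_iv (p : ℕ) {m : ℕ} (h : p + m ≤ n) : (iv n (p + 1) (p + m)).card = m := by
  rw [iv_eq_image_shift p h, Finset.card_image_of_injective _ (shift_injective p h),
    Finset.card_univ, Fintype.card_fin]

lemma orderEmbOfFin_iv (p : ℕ) {m : ℕ} (h : p + m ≤ n) :
    ⇑((iv n (p + 1) (p + m)).orderEmbOfFin (card_iv p h)) = shift p h := by
  refine (Finset.orderEmbOfFin_unique _ (fun s => ?_) (fun s t hst => ?_)).symm
  · rw [iv_eq_image_shift p h]
    exact Finset.mem_image_of_mem _ (Finset.mem_univ s)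
  · exact Nat.add_lt_add_left hst p

lemma Delta_eq_det_submatrix {I J : Finset (Fin n)} {m : ℕ} (hI : I.card = m) (hJ : J.card = m) :
    Delta I J = ((mvPolynomialX (Fin n) (Fin n) ℂ).submatrix (I.orderEmbOfFin hI)
      (J.orderEmbOfFin hJ)).det := by
  subst hI
  rw [Delta, dif_pos hJ]
  rfl

noncomputable def genericMatrix (n : ℕ) : Matrix (Fin n) (Fin n) (Fn n) :=
  (mvPolynomialX (Fin n) (Fin n) ℂ).map (algebraMap (Rn n) (Fn n))

lemma algebraMap_Delta_iv (p q : ℕ) {m : ℕ} (hp : p + m ≤ n) (hq : q + m ≤ n) :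
    algebraMap (Rn n) (Fn n) (Delta (iv n (p + 1) (p + m)) (iv n (q + 1) (q + m)))
      = ((genericMatrix n).submatrix (shift p hp) (shift q hq)).det := by
  rw [Delta_eq_det_submatrix (card_iv p hp) (card_iv q hq), orderEmbOfFin_iv, orderEmbOfFin_iv,
    RingHom.map_det]
  rfl

lemma det_genericMatrix_submatrix_ne_zero {ι : Type*} [Fintype ι] [DecidableEq ι]
    {r c : ι → Fin n} (hr : Function.Injective r) (hc : Function.Injective c) :
    ((genericMatrix n).submatrix r c).det ≠ 0 := by
  rw [genericMatrix, Matrix.submatrix_map, ← RingHom.mapMatrix_apply, ← RingHom.map_det]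
  exact (map_ne_zero_iff _ (IsFractionRing.injective (Rn n) (Fn n))).mpr
    (det_submatrix_mvPolynomialX_ne_zero hr hc)

variable {E : IntermediateField ℂ (Fn n)}

lemma genericMatrix_mem_of_det_mem {p q m : ℕ} (hp : p + (m + 1) ≤ n) (hq : q + (m + 1) ≤ n)
    (hleft : ∀ i j : Fin n, (j : ℕ) < q + m → genericMatrix n i j ∈ E)
    (habove : ∀ i : Fin n, (i : ℕ) < p + m → genericMatrix n i (shift q hq (Fin.last m)) ∈ E)
    (hdet : ((genericMatrix n).submatrix (shift p hp) (shift q hq)).det ∈ E) :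
    genericMatrix n (shift p hp (Fin.last m)) (shift q hq (Fin.last m)) ∈ E := by
  refine last_last_mem_of_det_mem (M := (genericMatrix n).submatrix (shift p hp) (shift q hq))
    (fun a b hab => ?_) ?_ hdet
  · by_cases hb : b = Fin.last m
    · subst hb
      have := Fin.val_lt_last (hab.resolve_right (not_not.mpr rfl))
      exact habove _ (by simp; omega)
    · have := Fin.val_lt_last hb
      exact hleft _ _ (by simp; omega)
  · rw [submatrix_submatrix]
    exact det_genericMatrix_submatrix_ne_zero
      ((shift_injective p hp).comp (Fin.castSucc_injective m))
      ((shift_injective q hq).comp (Fin.castSucc_injective m))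

lemma genericMatrix_diag_mem (hGZ : GZset n ⊆ E) (j : Fin n)
    (hleft : ∀ i j' : Fin n, (j' : ℕ) < j → genericMatrix n i j' ∈ E)
    (habove : ∀ i : Fin n, (i : ℕ) < j → genericMatrix n i j ∈ E) :
    genericMatrix n j j ∈ E := by
  have h : 0 + ((j : ℕ) + 1) ≤ n := by omega
  have hj : shift 0 h (Fin.last j) = j := Fin.ext (by simp)
  have hdet : ((genericMatrix n).submatrix (shift 0 h) (shift 0 h)).det ∈ E := by
    rw [← algebraMap_Delta_iv]
    refine hGZ (Or.inr ⟨j + 1, by omega, by omega, ?_⟩)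
    simp [Dpr]
  have := genericMatrix_mem_of_det_mem h h (by simpa using hleft) (by simpa [hj] using habove) hdet
  rwa [hj] at this

lemma genericMatrix_upper_mem (hGZ : GZset n ⊆ E) {i j : Fin n} (hij : (i : ℕ) < j)
    (hleft : ∀ i' j' : Fin n, (j' : ℕ) < j → genericMatrix n i' j' ∈ E)
    (habove : ∀ i' : Fin n, (i' : ℕ) < i → genericMatrix n i' j ∈ E) :
    genericMatrix n i j ∈ E := by
  set φ := algebraMap (Rn n) (Fn n)
  have hp : 0 + ((i : ℕ) + 1) ≤ n := by omega
  have hq : ((j : ℕ) - i) + ((i : ℕ) + 1) ≤ n := by omega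
  have hp' : ((i : ℕ) + 1) + ((j : ℕ) - i) ≤ n := by omega
  have hq' : 0 + ((j : ℕ) - i) ≤ n := by omega
  have hi : shift 0 hp (Fin.last i) = i := Fin.ext (by simp)
  have hj : shift _ hq (Fin.last i) = j := Fin.ext (by simp; omega)
  have hDul : φ (Dul n (j + 1) (i + 1))
      = ((genericMatrix n).submatrix (shift 0 hp) (shift _ hq)).det := by
    rw [← algebraMap_Delta_iv, Dul]
    congr 3 <;> omega
  have hDll : φ (Dll n (j + 1) (j + 1 - (i + 1)))
      = ((genericMatrix n).submatrix (shift _ hp') (shift 0 hq')).det := by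
    rw [← algebraMap_Delta_iv, Dll]
    congr 3 <;> omega
  have hDll_mem : φ (Dll n (j + 1) (j + 1 - (i + 1))) ∈ E := by
    rw [hDll]
    exact det_mem_of_forall_mem fun a b => hleft _ _ (by simp; omega)
  have hDll_ne : φ (Dll n (j + 1) (j + 1 - (i + 1))) ≠ 0 := by
    rw [hDll]
    exact det_genericMatrix_submatrix_ne_zero (shift_injective _ hp') (shift_injective 0 hq')
  have hratio : φ (Dul n (j + 1) (i + 1)) / φ (Dll n (j + 1) (j + 1 - (i + 1))) ∈ E :=
    hGZ (Or.inl ⟨i + 1, j + 1, by omega, by omega, by omega, rfl⟩)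
  have hdet : ((genericMatrix n).submatrix (shift 0 hp) (shift _ hq)).det ∈ E := by
    rw [← hDul, ← div_mul_cancel₀ (φ (Dul n (j + 1) (i + 1))) hDll_ne]
    exact mul_mem hratio hDll_mem
  have := genericMatrix_mem_of_det_mem hp hq (fun i' j' h => hleft i' j' (by omega))
    (fun i' h => by rw [hj]; exact habove i' (by simpa using h)) hdet
  rwa [hi, hj] at this

lemma genericMatrix_mem (hGZ : GZset n ⊆ E)
    (hlow : ∀ i j : Fin n, (j : ℕ) < i → genericMatrix n i j ∈ E) (i j : Fin n) :
    genericMatrix n i j ∈ E := by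
  induction j using WellFoundedLT.induction generalizing i with
  | _ j ihcol =>
    have hleft : ∀ i' j' : Fin n, (j' : ℕ) < j → genericMatrix n i' j' ∈ E :=
      fun i' j' h => ihcol j' h i'
    induction i using WellFoundedLT.induction with
    | _ i ihrow =>
      rcases lt_trichotomy (i : ℕ) j with h | h | h
      · exact genericMatrix_upper_mem hGZ h hleft ihrow
      · obtain rfl := Fin.ext h
        exact genericMatrix_diag_mem hGZ i hleft ihrow
      · exact hlow i j h

end GZ

theorem Fn_generated_by_GZ_and_lower_triangular_general (n : ℕ) :
    IntermediateField.adjoin ℂ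
        ((GZset n ∪
          {g : Fn n | ∃ i j : Fin n, (j : ℕ) < (i : ℕ) ∧
            g = algebraMap (Rn n) (Fn n) (X (i, j))}) : Set (Fn n)) = ⊤ := by
  refine IntermediateField.eq_top_of_algebraMap_X_mem fun s => ?_
  refine GZ.genericMatrix_mem (fun g hg => ?_) (fun i j h => ?_) s.1 s.2
  · exact IntermediateField.subset_adjoin ℂ _ (Or.inl hg)
  · exact IntermediateField.subset_adjoin ℂ _ (Or.inr ⟨i, j, h, rfl⟩)

/-- **Generation of `ℂ(Mₙ)` by the Gelfand–Zeitlin Hamiltonians and the strictly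
lower-triangular variables:** the subfield of `Fₙ` generated over `ℂ` by the
Gelfand–Zeitlin Hamiltonians and the `x_{ij}` with `j < i` is all of `Fₙ`. -/
theorem Fn_generated_by_GZ_and_lower_triangular (n : ℕ) (hn : 0 < n) :
    IntermediateField.adjoin ℂ
        ((GZset n ∪
          {g : Fn n | ∃ i j : Fin n, (j : ℕ) < (i : ℕ) ∧
            g = algebraMap (Rn n) (Fn n) (X (i, j))}) : Set (Fn n)) = ⊤ :=
  Fn_generated_by_GZ_and_lower_triangular_general n
end
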